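/- arXiv:1401.7203 — 4 statements merged into one kernel-verified Lean document; each statement's English description precedes it below -/
import Mathlib

section
/- If L is a regular language over a finite alphabet X, then the cyclic closure cyc(L), consisting of all cyclic permutations of words in L, is also a regular language. -/
/-- The cyclic closure of a language: all cyclic permutations of words in `L`. -/
def cyclicClosure {X : Type*} (L : Language X) : Language X :=
  {w | ∃ u v : List X, u ++ v ∈ L ∧ w = v ++ u}

/-! If a DFA `M` accepts `L`, a rotation `v ++ u` of a word `u ++ v ∈ L` is classified by the
state `q` that `M` reaches after reading `u`, so `cyc L` is the finite union over `q` of the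
products `{v | M accepts v from q} * {u | M reaches q on u}`. Regular languages are closed under
products and finite unions by Myhill–Nerode: every left quotient of `l * m` or of `⨆ i, l i` is
assembled from left quotients of the pieces, of which there are finitely many. -/

namespace Language

variable {α : Type*}

theorem leftQuotient_iSup {ι : Sort*} (l : ι → Language α) (x : List α) :
    (⨆ i, l i).leftQuotient x = ⨆ i, (l i).leftQuotient x := by
  ext y
  simp only [mem_leftQuotient, mem_iSup]

theorem IsRegular.iSup {ι : Type*} [Finite ι] {l : ι → Language α}
    (h : ∀ i, (l i).IsRegular) : (⨆ i, l i).IsRegular := by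
  refine .of_finite_range_leftQuotient <|
    ((Set.Finite.pi fun i => (h i).finite_range_leftQuotient).image fun f => ⨆ i, f i).subset ?_
  rintro _ ⟨x, rfl⟩
  exact ⟨fun i => (l i).leftQuotient x, fun i _ => ⟨x, rfl⟩, (leftQuotient_iSup l x).symm⟩

theorem leftQuotient_mul (l m : Language α) (x : List α) :
    (l * m).leftQuotient x =
      l.leftQuotient x * m + sSup (m.leftQuotient '' {y | ∃ a ∈ l, a ++ y = x}) := by
  ext z
  simp only [mem_leftQuotient, mem_mul, mem_add, sSup_image, mem_iSup]
  constructor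
  · rintro ⟨a, ha, b, hb, hab⟩
    obtain ⟨c, rfl, rfl⟩ | ⟨c, rfl, rfl⟩ := List.append_eq_append_iff.mp hab
    · exact Or.inr ⟨c, ⟨a, ha, rfl⟩, hb⟩
    · exact Or.inl ⟨c, ha, b, hb, rfl⟩
  · rintro (⟨c, hc, b, hb, rfl⟩ | ⟨y, ⟨a, ha, rfl⟩, hy⟩)
    · exact ⟨x ++ c, hc, b, hb, List.append_assoc _ _ _⟩
    · exact ⟨a, ha, y ++ z, hy, (List.append_assoc _ _ _).symm⟩

theorem IsRegular.mul {l m : Language α} (hl : l.IsRegular) (hm : m.IsRegular) :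
    (l * m).IsRegular := by
  refine .of_finite_range_leftQuotient <|
    ((hl.finite_range_leftQuotient.prod hm.finite_range_leftQuotient.finite_subsets).image
      fun p => p.1 * m + sSup p.2).subset ?_
  rintro _ ⟨x, rfl⟩
  exact ⟨(l.leftQuotient x, _), ⟨⟨x, rfl⟩, Set.image_subset_range _ _⟩,
    (leftQuotient_mul l m x).symm⟩

end Language

namespace DFA

variable {α σ : Type*}

theorem isRegular_accepts [Finite σ] (M : DFA α σ) : M.accepts.IsRegular :=
  Language.isRegular_iff.mpr ⟨σ, .ofFinite σ, M, rfl⟩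

theorem isRegular_acceptsFrom [Finite σ] (M : DFA α σ) (q : σ) : (M.acceptsFrom q).IsRegular :=
  isRegular_accepts { M with start := q }

theorem cyclicClosure_accepts (M : DFA α σ) :
    cyclicClosure M.accepts = ⨆ q, M.acceptsFrom q * { M with accept := {q} }.accepts := by
  ext w
  simp only [cyclicClosure, Language.mem_iSup, Language.mem_mul, mem_accepts, mem_acceptsFrom]
  constructor
  · rintro ⟨u, v, huv, rfl⟩
    exact ⟨M.eval u, v, by rwa [eval, evalFrom_of_append] at huv, u, rfl, rfl⟩
  · rintro ⟨q, v, hv, u, hu, rfl⟩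
    obtain rfl : M.eval u = q := hu
    exact ⟨u, v, by rwa [eval, evalFrom_of_append], rfl⟩

end DFA

theorem cyclicClosure_isRegular_general {X : Type*} (L : Language X)
    (hL : L.IsRegular) : (cyclicClosure L).IsRegular := by
  obtain ⟨σ, _, M, rfl⟩ := hL
  rw [M.cyclicClosure_accepts]
  exact .iSup fun q => (M.isRegular_acceptsFrom q).mul (DFA.isRegular_accepts _)

theorem cyclicClosure_isRegular {X : Type*} [Fintype X] (L : Language X)
    (hL : L.IsRegular) : (cyclicClosure L).IsRegular :=
  cyclicClosure_isRegular_general L hL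
end

section
/- Let G be a group generated by a finite inverse-closed set X. If the language of geodesic words Geo(G,X) is regular, then the language of geodesics with respect to cyclic permutation (words all of whose cyclic permutations are geodesic) is also regular. -/
/-- The image in `G` of a word over the generating alphabet `X`, where `f`
sends each letter to the generator it represents. -/
def wordProd {X G : Type*} [Group G] (f : X → G) (w : List X) : G :=
  (w.map f).prod

/-- A word is geodesic if no shorter word represents the same group element. -/
def IsGeodesicWord {X G : Type*} [Group G] (f : X → G) (w : List X) : Prop :=
  ∀ v : List X, wordProd f v = wordProd f w → w.length ≤ v.length

/-- A word is a geodesic with respect to cyclic permutation if every cyclic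
permutation of it is geodesic. -/
def IsCycGeodesicWord {X G : Type*} [Group G] (f : X → G) (w : List X) : Prop :=
  ∀ u v : List X, w = u ++ v → IsGeodesicWord f (v ++ u)

/-!
Write `cyc L` for the set of cyclic permutations of words of `L`. A word is geodesic with respect
to cyclic permutation iff it does not lie in `cyc (X* \ Geo)`, and regular languages are closed
under complement, so it suffices that `cyc` preserves regularity. If a DFA `M` recognises `L`,
then `v ++ u ∈ cyc L` iff `M`, started in the state `q` reached on `u`, accepts `v`. While reading
`w`, a DFA can keep the map `q ↦ δ(q, w)` together with the pairs `(q, δ(start, u))` over all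
splittings `w = v ++ u` such that `δ(q, v)` is accepting; `w ∈ cyc L` iff one of these pairs
is diagonal.
-/

theorem List.append_eq_append_singleton_iff {α : Type*} {v u w : List α} {a : α} :
    v ++ u = w ++ [a] ↔ (v = w ++ [a] ∧ u = []) ∨ ∃ u', u = u' ++ [a] ∧ v ++ u' = w := by
  rcases List.eq_nil_or_concat u with rfl | ⟨u', b, rfl⟩
  · simp
  · simp [← List.append_assoc, List.append_singleton_inj, and_comm]

namespace Language

variable {α : Type*}

def cyc (L : Language α) : Language α :=
  {w | ∃ u v, u ++ v ∈ L ∧ w = v ++ u}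

theorem compl_cyc_compl (L : Language α) :
    Lᶜ.cycᶜ = {w | ∀ u v, w = u ++ v → v ++ u ∈ L} := by
  ext w
  constructor
  · intro h u v hw
    by_contra hvu
    exact h ⟨v, u, hvu, hw⟩
  · rintro h ⟨u, v, huv, rfl⟩
    exact huv (h v u rfl)

end Language

namespace DFA

variable {α σ : Type*} (M : DFA α σ)

def cyc : DFA α ((σ → σ) × Set (σ × σ)) where
  step s a := (fun q => M.step (s.1 q) a,
    {p | (∃ r, (p.1, r) ∈ s.2 ∧ p.2 = M.step r a) ∨
      (M.step (s.1 p.1) a ∈ M.accept ∧ p.2 = M.start)})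
  start := (id, {p | p.1 ∈ M.accept ∧ p.2 = M.start})
  accept := {s | ∃ q, (q, q) ∈ s.2}

theorem eval_cyc (w : List α) :
    M.cyc.eval w = (fun q => M.evalFrom q w,
      {p | ∃ v u, w = v ++ u ∧ M.evalFrom p.1 v ∈ M.accept ∧ p.2 = M.eval u}) := by
  induction w using List.reverseRecOn with
  | nil =>
    refine Prod.ext rfl ?_
    ext ⟨q, r⟩
    simp [cyc, eq_comm]
  | append_singleton w a ih =>
    rw [eval_append_singleton, ih]
    refine Prod.ext (funext fun q => (M.evalFrom_append_singleton q w a).symm) ?_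
    ext ⟨q, r⟩
    simp only [cyc, Set.mem_ofPred_eq, eq_comm (a := w ++ [a]), List.append_eq_append_singleton_iff]
    constructor
    · rintro (⟨_, ⟨v, u, rfl, hv, rfl⟩, rfl⟩ | ⟨hw, rfl⟩)
      · exact ⟨v, u ++ [a], Or.inr ⟨u, rfl, rfl⟩, hv, (M.eval_append_singleton u a).symm⟩
      · exact ⟨w ++ [a], [], Or.inl ⟨rfl, rfl⟩, by rwa [evalFrom_append_singleton], rfl⟩
    · rintro ⟨v, u, ⟨rfl, rfl⟩ | ⟨u, rfl, rfl⟩, hv, rfl⟩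
      · exact Or.inr ⟨by rwa [← evalFrom_append_singleton], rfl⟩
      · exact Or.inl ⟨_, ⟨v, u, rfl, hv, rfl⟩, M.eval_append_singleton u a⟩

theorem accepts_cyc : M.cyc.accepts = M.accepts.cyc := by
  ext w
  rw [mem_accepts, eval_cyc]
  constructor
  · rintro ⟨_, v, u, rfl, hv, rfl⟩
    exact ⟨u, v, by rwa [mem_accepts, eval, evalFrom_of_append], rfl⟩
  · rintro ⟨u, v, huv, rfl⟩
    rw [mem_accepts, eval, evalFrom_of_append] at huv
    exact ⟨M.eval u, v, u, rfl, huv, rfl⟩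

end DFA

theorem Language.IsRegular.cyc {α : Type*} {L : Language α} (h : L.IsRegular) :
    L.cyc.IsRegular := by
  classical
  obtain ⟨σ, _, M, rfl⟩ := h
  exact ⟨_, inferInstance, M.cyc, M.accepts_cyc⟩

theorem cycGeodesics_isRegular_of_geodesics_isRegular_general {X G : Type*} [Group G]
    (f : X → G)
    (hreg : Language.IsRegular {w : List X | IsGeodesicWord f w}) :
    Language.IsRegular {w : List X | IsCycGeodesicWord f w} := by
  have h := hreg.compl.cyc.compl
  rw [Language.compl_cyc_compl {w : List X | IsGeodesicWord f w}] at h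
  exact h

theorem cycGeodesics_isRegular_of_geodesics_isRegular {X G : Type*} [Fintype X] [Group G]
    (f : X → G) (hinv : ∀ x : X, ∃ y : X, f y = (f x)⁻¹)
    (hgen : Subgroup.closure (Set.range f) = ⊤)
    (hreg : Language.IsRegular {w : List X | IsGeodesicWord f w}) :
    Language.IsRegular {w : List X | IsCycGeodesicWord f w} :=
  cycGeodesics_isRegular_of_geodesics_isRegular_general f hreg
end

section
/- In the group G = ℤ² ⋊ ℤ/2ℤ with generators a, b swapped by t, the number of conjugacy classes whose minimal-length elements (over the generating set {a^{±1}, b^{±1}, t}) have length n is: 1 for n = 0, 3 for n = 1, 4k+3 for n = 2k with k ≥ 1, and 4k+4 for n = 2k+1 with k ≥ 1; consequently the conjugacy growth series equals (1+z)(1+2z+3z²−z³−z⁴)/(1−z²)². -/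
/-!
Every element of `G` is uniquely `a^i b^j t^ε`, so `G` is a copy of `ℤ² ⋊ C₂` on `ℤ × ℤ × Bool`,
and the word length of `a^i b^j t^ε` is the weight `|i| + |j| + ε`: a word of that length exists,
and left multiplication by a generator changes the weight by at most one. Conjugation by `t`
swaps the exponents of `a^i b^j`, while `a^i b^j t` is conjugate exactly to the `a^i' b^j' t`
with `i' + j' = i + j`. So the classes are the unordered pairs `{i, j}`, of length `|i| + |j|`,
and the integers `s`, of length `|s| + 1`. There are `2n + 1` (n even) or `2n` (n odd) sorted
pairs on the diamond `|i| + |j| = n`, and two integers with `|s| = n - 1` once `n ≥ 2`.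
-/

open PowerSeries

section Words

variable {M : Type*} [Monoid M] {S : Set M} {ν : M → ℕ}

theorem apply_list_prod_le_length (h1 : ν 1 = 0) (hmul : ∀ x ∈ S, ∀ g, ν (x * g) ≤ ν g + 1)
    {w : List M} (hw : ∀ x ∈ w, x ∈ S) : ν w.prod ≤ w.length := by
  induction w with
  | nil => simp [h1]
  | cons x w ih =>
    rw [List.prod_cons, List.length_cons]
    have := hmul x (hw x List.mem_cons_self) w.prod
    have := ih fun y hy => hw y (List.mem_cons_of_mem x hy)
    omega

theorem sInf_wordLengths_eq (h1 : ν 1 = 0) (hmul : ∀ x ∈ S, ∀ g, ν (x * g) ≤ ν g + 1)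
    {g : M} {w : List M} (hw : ∀ x ∈ w, x ∈ S) (hprod : w.prod = g) (hlen : w.length = ν g) :
    sInf {n | ∃ w : List M, (∀ x ∈ w, x ∈ S) ∧ w.prod = g ∧ w.length = n} = ν g := by
  refine IsLeast.csInf_eq ⟨⟨w, hw, hprod, hlen⟩, ?_⟩
  rintro _ ⟨w', hw', rfl, rfl⟩
  exact apply_list_prod_le_length h1 hmul hw'

end Words

theorem exists_list_prod_eq_zpow {G : Type*} [Group G] (x : G) (i : ℤ) :
    ∃ w : List G, (∀ y ∈ w, y = x ∨ y = x⁻¹) ∧ w.prod = x ^ i ∧ w.length = i.natAbs := by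
  rcases Int.natAbs_eq i with hi | hi
  · refine ⟨List.replicate i.natAbs x, fun y hy => .inl (List.eq_of_mem_replicate hy), ?_, ?_⟩
    · rw [List.prod_replicate, hi, zpow_natCast, Int.natAbs_natCast]
    · exact List.length_replicate
  · refine ⟨List.replicate i.natAbs x⁻¹, fun y hy => .inr (List.eq_of_mem_replicate hy), ?_, ?_⟩
    · rw [List.prod_replicate, hi, zpow_neg, zpow_natCast, Int.natAbs_neg, Int.natAbs_natCast,
        inv_pow]
    · exact List.length_replicate

namespace IntWreathC2

/-- `(i, j, ε)` stands for `a^i b^j t^ε`, and `t` swaps the two factors of `ℤ²`. -/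
def mul : ℤ × ℤ × Bool → ℤ × ℤ × Bool → ℤ × ℤ × Bool
  | (i, j, false), (i', j', ε') => (i + i', j + j', ε')
  | (i, j, true), (i', j', ε') => (i + j', j + i', !ε')

def weight : ℤ × ℤ × Bool → ℕ
  | (i, j, ε) => i.natAbs + j.natAbs + ε.toNat

def classInv : ℤ × ℤ × Bool → (ℤ × ℤ) ⊕ ℤ
  | (i, j, false) => .inl (min i j, max i j)
  | (i, j, true) => .inr (i + j)

def classWeight : (ℤ × ℤ) ⊕ ℤ → ℕ
  | .inl (i, j) => i.natAbs + j.natAbs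
  | .inr s => s.natAbs + 1

def classRep : (ℤ × ℤ) ⊕ ℤ → ℤ × ℤ × Bool
  | .inl (i, j) => (i, j, false)
  | .inr s => (s, 0, true)

def generators : Set (ℤ × ℤ × Bool) :=
  {(1, 0, false), (-1, 0, false), (0, 1, false), (0, -1, false), (0, 0, true)}

theorem weight_mul_le {s : ℤ × ℤ × Bool} (hs : s ∈ generators) (q : ℤ × ℤ × Bool) :
    weight (mul s q) ≤ weight q + 1 := by
  obtain ⟨i, j, _ | _⟩ := q <;>
    rcases hs with rfl | rfl | rfl | rfl | rfl <;>
    simp only [mul, weight, Bool.toNat_true, Bool.toNat_false, Bool.not_false, Bool.not_true] <;>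
    omega

theorem classInv_eq_iff {p q : ℤ × ℤ × Bool} :
    classInv p = classInv q ↔ ∃ r, mul r p = mul q r := by
  obtain ⟨i, j, _ | _⟩ := p <;> obtain ⟨i', j', _ | _⟩ := q <;>
    simp only [classInv, reduceCtorEq, Sum.inl.injEq, Sum.inr.injEq, Prod.mk.injEq, false_iff]
  · constructor
    · intro h
      obtain ⟨rfl, rfl⟩ | ⟨rfl, rfl⟩ : (i = i' ∧ j = j') ∨ (i = j' ∧ j = i') := by omega
      exacts [⟨(0, 0, false), by simp [mul]⟩, ⟨(0, 0, true), by simp [mul, add_comm]⟩]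
    · rintro ⟨⟨k, l, _ | _⟩, h⟩ <;> simp only [mul, Prod.mk.injEq] at h <;> omega
  · rintro ⟨⟨k, l, _ | _⟩, h⟩ <;> simp [mul] at h
  · rintro ⟨⟨k, l, _ | _⟩, h⟩ <;> simp [mul] at h
  · constructor
    · intro h
      exact ⟨(i' - i, 0, false), by simp only [mul, Bool.not_false, Prod.mk.injEq, and_true]; omega⟩
    · rintro ⟨⟨k, l, _ | _⟩, h⟩ <;> simp only [mul, Prod.mk.injEq] at h <;> omega

theorem classWeight_classInv_le (p : ℤ × ℤ × Bool) : classWeight (classInv p) ≤ weight p := by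
  obtain ⟨i, j, _ | _⟩ := p <;>
    simp only [classInv, classWeight, weight, Bool.toNat_true, Bool.toNat_false] <;> omega

theorem classInv_classRep_classInv (p : ℤ × ℤ × Bool) :
    classInv (classRep (classInv p)) = classInv p := by
  obtain ⟨i, j, _ | _⟩ := p <;>
    simp only [classInv, classRep, Sum.inl.injEq, Sum.inr.injEq, Prod.mk.injEq] <;> omega

theorem weight_classRep (r : (ℤ × ℤ) ⊕ ℤ) : weight (classRep r) = classWeight r := by
  rcases r with ⟨i, j⟩ | s <;> rfl

-- The pairs with `j ≥ 0`, where `j = n - |i|`, and those with `j < 0`, where `i = -n - j`.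
noncomputable def sortedPairs (n : ℕ) : Finset (ℤ × ℤ) :=
  (Finset.Icc (-n : ℤ) (n / 2 : ℕ)).image (fun i => (i, n - i.natAbs)) ∪
    (Finset.Icc (-(n / 2 : ℕ) : ℤ) (-1)).image (fun j => (-n - j, j))

theorem mem_sortedPairs {n : ℕ} {i j : ℤ} :
    (i, j) ∈ sortedPairs n ↔ i ≤ j ∧ i.natAbs + j.natAbs = n := by
  simp only [sortedPairs, Finset.mem_union, Finset.mem_image, Finset.mem_Icc, Prod.mk.injEq]
  constructor
  · rintro (⟨k, hk, rfl, rfl⟩ | ⟨k, hk, rfl, rfl⟩) <;> omega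
  · intro h
    rcases le_or_gt 0 j with hj | hj
    exacts [.inl ⟨i, by omega, rfl, by omega⟩, .inr ⟨j, by omega, by omega, rfl⟩]

theorem card_sortedPairs (n : ℕ) : (sortedPairs n).card = n + 2 * (n / 2) + 1 := by
  rw [sortedPairs, Finset.card_union_of_disjoint, Finset.card_image_of_injective,
    Finset.card_image_of_injective, Int.card_Icc, Int.card_Icc]
  · omega
  · exact fun j j' h => (Prod.ext_iff.1 h).2
  · exact fun i i' h => (Prod.ext_iff.1 h).1
  · simp only [Finset.disjoint_left, Finset.mem_image, Finset.mem_Icc]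
    rintro _ ⟨i, hi, rfl⟩ ⟨j, hj, h⟩
    rw [Prod.ext_iff] at h
    omega

def signedPreds (n : ℕ) : Finset ℤ := if n = 0 then ∅ else {(n : ℤ) - 1, 1 - (n : ℤ)}

theorem mem_signedPreds {n : ℕ} {s : ℤ} : s ∈ signedPreds n ↔ s.natAbs + 1 = n := by
  unfold signedPreds
  split_ifs
  · simp only [Finset.notMem_empty, false_iff]; omega
  · simp only [Finset.mem_insert, Finset.mem_singleton]; omega

noncomputable def classesOfWeight (n : ℕ) : Finset ((ℤ × ℤ) ⊕ ℤ) :=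
  (sortedPairs n).disjSum (signedPreds n)

theorem mem_classesOfWeight {n : ℕ} {r : (ℤ × ℤ) ⊕ ℤ} :
    r ∈ classesOfWeight n ↔ classInv (classRep r) = r ∧ classWeight r = n := by
  rcases r with ⟨i, j⟩ | s
  · simp only [classesOfWeight, Finset.inl_mem_disjSum, mem_sortedPairs, classRep, classInv,
      classWeight, Sum.inl.injEq, Prod.mk.injEq]
    omega
  · simp [classesOfWeight, mem_signedPreds, classRep, classInv, classWeight]

theorem card_classesOfWeight_zero : (classesOfWeight 0).card = 1 := by
  simp [classesOfWeight, card_sortedPairs, signedPreds]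

theorem card_classesOfWeight_one : (classesOfWeight 1).card = 3 := by
  simp [classesOfWeight, card_sortedPairs, signedPreds]

theorem card_classesOfWeight_of_two_le {n : ℕ} (hn : 2 ≤ n) :
    (classesOfWeight n).card = n + 2 * (n / 2) + 3 := by
  rw [classesOfWeight, Finset.card_disjSum, card_sortedPairs, signedPreds, if_neg (by omega),
    Finset.card_pair (by omega)]

variable {G : Type*} [Group G]

def nf (a b t : G) : ℤ × ℤ × Bool → G
  | (i, j, ε) => a ^ i * b ^ j * cond ε t 1

theorem generators_eq_image_nf (a b t : G) :
    ({a, a⁻¹, b, b⁻¹, t} : Set G) = nf a b t '' generators := by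
  simp [generators, Set.image_insert_eq, nf]

theorem nf_mul {a b t : G} (ht : t * t = 1) (hab : Commute a b) (htat : t * a * t = b)
    (p q : ℤ × ℤ × Bool) : nf a b t p * nf a b t q = nf a b t (mul p q) := by
  have hta : SemiconjBy t a b := by rw [SemiconjBy, ← htat, mul_assoc _ t, ht, mul_one]
  have htb : SemiconjBy t b a := by rw [SemiconjBy, ← htat, ← mul_assoc, ← mul_assoc, ht, one_mul]
  have hba (m n : ℤ) : b ^ m * a ^ n = a ^ n * b ^ m := (hab.zpow_zpow n m).eq.symm
  have hta' (m : ℤ) (x : G) : t * (a ^ m * x) = b ^ m * (t * x) := by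
    rw [← mul_assoc, (hta.zpow_right m).eq, mul_assoc]
  have htb' (m : ℤ) (x : G) : t * (b ^ m * x) = a ^ m * (t * x) := by
    rw [← mul_assoc, (htb.zpow_right m).eq, mul_assoc]
  have hba' (m n : ℤ) (x : G) : b ^ m * (a ^ n * x) = a ^ n * (b ^ m * x) := by
    rw [← mul_assoc, hba, mul_assoc]
  -- Move every `t` to the right, and every power of `a` to the left of the powers of `b`.
  obtain ⟨i, j, _ | _⟩ := p <;> obtain ⟨k, l, _ | _⟩ := q <;>
    simp only [nf, mul, cond_false, cond_true, Bool.not_false, Bool.not_true, mul_one, zpow_add,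
      mul_assoc, (htb.zpow_right _).eq, hta', htb', hba, hba', ht]

theorem exists_word_nf (a b t : G) (p : ℤ × ℤ × Bool) :
    ∃ w : List G, (∀ x ∈ w, x ∈ ({a, a⁻¹, b, b⁻¹, t} : Set G)) ∧
      w.prod = nf a b t p ∧ w.length = weight p := by
  obtain ⟨i, j, ε⟩ := p
  obtain ⟨u, hu, hup, hul⟩ := exists_list_prod_eq_zpow a i
  obtain ⟨v, hv, hvp, hvl⟩ := exists_list_prod_eq_zpow b j
  refine ⟨u ++ v ++ cond ε [t] [], ?_, ?_, ?_⟩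
  · simp only [List.mem_append]
    rintro x ((hx | hx) | hx)
    · rcases hu x hx with rfl | rfl <;> simp
    · rcases hv x hx with rfl | rfl <;> simp
    · cases ε <;> simp_all
  · cases ε <;> simp [nf, hup, hvp, mul_assoc]
  · cases ε <;> simp [weight, hul, hvl, add_assoc]

structure IsNormalForm (a b t : G) : Prop where
  t_mul_self : t * t = 1
  commute : Commute a b
  t_mul_a_mul_t : t * a * t = b
  bijective : Function.Bijective (nf a b t)

namespace IsNormalForm

variable {a b t : G} (h : IsNormalForm a b t)
include h

theorem nf_mul (p q : ℤ × ℤ × Bool) : nf a b t p * nf a b t q = nf a b t (mul p q) :=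
  IntWreathC2.nf_mul h.t_mul_self h.commute h.t_mul_a_mul_t p q

theorem sInf_wordLengths_nf (p : ℤ × ℤ × Bool) :
    sInf {n | ∃ w : List G, (∀ x ∈ w, x ∈ ({a, a⁻¹, b, b⁻¹, t} : Set G)) ∧
      w.prod = nf a b t p ∧ w.length = n} = weight p := by
  let ν : G → ℕ := fun g => weight ((Equiv.ofBijective _ h.bijective).symm g)
  have hν q : ν (nf a b t q) = weight q :=
    congrArg weight ((Equiv.ofBijective _ h.bijective).symm_apply_apply q)
  have hν1 : ν 1 = 0 := by simpa [nf, weight] using hν (0, 0, false)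
  have hνmul : ∀ x ∈ ({a, a⁻¹, b, b⁻¹, t} : Set G), ∀ g, ν (x * g) ≤ ν g + 1 := by
    rw [generators_eq_image_nf]
    rintro _ ⟨s, hs, rfl⟩ g
    obtain ⟨q, rfl⟩ := h.bijective.2 g
    rw [h.nf_mul, hν, hν]
    exact weight_mul_le hs q
  obtain ⟨w, hw, hprod, hlen⟩ := exists_word_nf a b t p
  rw [sInf_wordLengths_eq hν1 hνmul hw hprod (by rw [hlen, hν]), hν]

theorem isConj_nf_iff {p q : ℤ × ℤ × Bool} :
    IsConj (nf a b t p) (nf a b t q) ↔ classInv p = classInv q := by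
  rw [classInv_eq_iff, isConj_iff]
  constructor
  · rintro ⟨c, hc⟩
    obtain ⟨r, rfl⟩ := h.bijective.2 c
    refine ⟨r, h.bijective.1 ?_⟩
    rw [← h.nf_mul, ← h.nf_mul, ← hc, inv_mul_cancel_right]
  · rintro ⟨r, hr⟩
    refine ⟨nf a b t r, ?_⟩
    rw [mul_inv_eq_iff_eq_mul, h.nf_mul, h.nf_mul, hr]

theorem sInf_lengths_conjClass {len : G → ℕ} (hlen : ∀ p, len (nf a b t p) = weight p)
    (p : ℤ × ℤ × Bool) :
    sInf {n | ∃ g, ConjClasses.mk g = ConjClasses.mk (nf a b t p) ∧ len g = n} =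
      classWeight (classInv p) := by
  refine IsLeast.csInf_eq ⟨⟨nf a b t (classRep (classInv p)), ?_, ?_⟩, ?_⟩
  · rw [ConjClasses.mk_eq_mk_iff_isConj, h.isConj_nf_iff, classInv_classRep_classInv]
  · rw [hlen, weight_classRep]
  · rintro _ ⟨g, hg, rfl⟩
    obtain ⟨q, rfl⟩ := h.bijective.2 g
    rw [ConjClasses.mk_eq_mk_iff_isConj, h.isConj_nf_iff] at hg
    rw [hlen, ← hg]
    exact classWeight_classInv_le q

theorem ncard_setOf_eq_card_classesOfWeight {clen : ConjClasses G → ℕ}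
    (hclen : ∀ p, clen (ConjClasses.mk (nf a b t p)) = classWeight (classInv p)) (n : ℕ) :
    {x | clen x = n}.ncard = (classesOfWeight n).card := by
  set F : (ℤ × ℤ) ⊕ ℤ → ConjClasses G := fun r => ConjClasses.mk (nf a b t (classRep r))
  have hF : {x | clen x = n} = F '' classesOfWeight n := by
    ext x
    obtain ⟨g, rfl⟩ := ConjClasses.exists_rep x
    obtain ⟨p, rfl⟩ := h.bijective.2 g
    simp only [Set.mem_ofPred_eq, Set.mem_image, Finset.mem_coe, mem_classesOfWeight, hclen, F,
      ConjClasses.mk_eq_mk_iff_isConj, h.isConj_nf_iff]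
    constructor
    · rintro rfl
      exact ⟨classInv p, ⟨classInv_classRep_classInv p, rfl⟩, classInv_classRep_classInv p⟩
    · rintro ⟨r, ⟨hr, rfl⟩, hrp⟩
      rw [← hrp, hr]
  rw [hF, Set.InjOn.ncard_image, Set.ncard_coe_finset]
  intro r hr r' hr' hrr'
  simp only [F, ConjClasses.mk_eq_mk_iff_isConj, h.isConj_nf_iff] at hrr'
  rw [← (mem_classesOfWeight.1 hr).1, hrr', (mem_classesOfWeight.1 hr').1]

end IsNormalForm

end IntWreathC2

theorem mk_mul_one_sub_X_sq_sq {c : ℕ → ℕ} (h0 : c 0 = 1) (h1 : c 1 = 3)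
    (hk : ∀ k : ℕ, 1 ≤ k → c (2 * k) = 4 * k + 3 ∧ c (2 * k + 1) = 4 * k + 4) :
    (PowerSeries.mk fun n => (c n : ℤ)) * (1 - X ^ 2) ^ 2 =
      (1 + X) * (1 + 2 * X + 3 * X ^ 2 - X ^ 3 - X ^ 4) := by
  have hc (n : ℕ) (hn : 2 ≤ n) : c n + n % 2 = 2 * n + 3 := by
    obtain ⟨k, rfl | rfl⟩ := Nat.even_or_odd' n
    · have := (hk k (by omega)).1; omega
    · have := (hk k (by omega)).2; omega
  set f := PowerSeries.mk fun n => (c n : ℤ)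
  have hL : f * (1 - X ^ 2) ^ 2 = f - (X ^ 2 * f + X ^ 2 * f) + X ^ 4 * f := by ring
  have hR : ((1 + X) * (1 + 2 * X + 3 * X ^ 2 - X ^ 3 - X ^ 4) : ℤ⟦X⟧) =
      1 + (X ^ 1 + X ^ 1 + X ^ 1) + (X ^ 2 + X ^ 2 + X ^ 2 + X ^ 2 + X ^ 2) + (X ^ 3 + X ^ 3) -
        (X ^ 4 + X ^ 4) - X ^ 5 := by ring
  rw [hL, hR]
  ext n
  simp only [map_add, map_sub, coeff_X_pow_mul', coeff_one, coeff_X_pow, f, coeff_mk]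
  rcases Nat.lt_or_ge n 6 with hn | hn
  · have := hc 2 le_rfl; have := hc 3 (by omega); have := hc 4 (by omega); have := hc 5 (by omega)
    interval_cases n <;> simp <;> omega
  · have := hc n (by omega); have := hc (n - 2) (by omega); have := hc (n - 4) (by omega)
    split_ifs <;> omega

open IntWreathC2

/-- In `G = ℤ² ⋊ ℤ/2ℤ = ⟨a,b,t ∣ t² = 1, ab = ba, tat = b⟩` with generating set
`Z = {a^{±1}, b^{±1}, t}`, the number `c n` of conjugacy classes of minimal
length `n` is `1, 3, 4k+3 (n = 2k, k ≥ 1), 4k+4 (n = 2k+1, k ≥ 1)`, and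
consequently the conjugacy growth series is
`(1+z)(1+2z+3z²−z³−z⁴)/(1−z²)²` (stated multiplied through by `(1−z²)²`). -/
theorem conjugacy_growth_Z2_semidirect_Z2 {G : Type*} [Group G]
    (a b t : G)
    (ht : t * t = 1) (hab : a * b = b * a) (htat : t * a * t = b)
    (hsurj : ∀ g : G, ∃ (i j : ℤ) (ε : Bool), g = a ^ i * b ^ j * (cond ε t 1))
    (hinj : ∀ (i j : ℤ) (ε : Bool) (i' j' : ℤ) (ε' : Bool),
      a ^ i * b ^ j * (cond ε t 1) = a ^ i' * b ^ j' * (cond ε' t 1) →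
      i = i' ∧ j = j' ∧ ε = ε')
    (len : G → ℕ)
    (hlen : ∀ g : G, len g = sInf {n : ℕ | ∃ w : List G,
      (∀ x ∈ w, x ∈ ({a, a⁻¹, b, b⁻¹, t} : Set G)) ∧ w.prod = g ∧ w.length = n})
    (clen : ConjClasses G → ℕ)
    (hclen : ∀ x : ConjClasses G, clen x = sInf {n : ℕ | ∃ g : G,
      ConjClasses.mk g = x ∧ len g = n})
    (c : ℕ → ℕ) (hc : ∀ n : ℕ, c n = Set.ncard {x : ConjClasses G | clen x = n}) :
    c 0 = 1 ∧ c 1 = 3 ∧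
    (∀ k : ℕ, 1 ≤ k → c (2 * k) = 4 * k + 3 ∧ c (2 * k + 1) = 4 * k + 4) ∧
    (PowerSeries.mk fun n => (c n : ℤ)) * (1 - X ^ 2) ^ 2 =
      (1 + X) * (1 + 2 * X + 3 * X ^ 2 - X ^ 3 - X ^ 4) := by
  have h : IsNormalForm a b t := ⟨ht, hab, htat,
    fun ⟨i, j, ε⟩ ⟨i', j', ε'⟩ hpq => by obtain ⟨rfl, rfl, rfl⟩ := hinj i j ε i' j' ε' hpq; rfl,
    fun g => by obtain ⟨i, j, ε, hg⟩ := hsurj g; exact ⟨(i, j, ε), hg.symm⟩⟩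
  have hlen' p : len (nf a b t p) = weight p := (hlen _).trans (h.sInf_wordLengths_nf p)
  have hclen' p : clen (ConjClasses.mk (nf a b t p)) = classWeight (classInv p) :=
    (hclen _).trans (h.sInf_lengths_conjClass hlen' p)
  have hcount n : c n = (classesOfWeight n).card :=
    (hc n).trans (h.ncard_setOf_eq_card_classesOfWeight hclen' n)
  have h0 : c 0 = 1 := by rw [hcount, card_classesOfWeight_zero]
  have h1 : c 1 = 3 := by rw [hcount, card_classesOfWeight_one]
  have hk (k : ℕ) (hk1 : 1 ≤ k) : c (2 * k) = 4 * k + 3 ∧ c (2 * k + 1) = 4 * k + 4 := by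
    simp only [hcount, card_classesOfWeight_of_two_le (show 2 ≤ 2 * k by omega),
      card_classesOfWeight_of_two_le (show 2 ≤ 2 * k + 1 by omega)]
    omega
  exact ⟨h0, h1, hk, mk_mul_one_sub_X_sq_sq h0 h1 hk⟩
end

section
/- Let G be a group with finite inverse-closed generating set X. Suppose every cyclic permutation of a word w over X is geodesic, and some positive power w^j exists such that w^j is geodesic for all j ≥ 1. If w is conjugate in G to an element of strictly smaller length than l(w), then for sufficiently large j the word w^j is not geodesic — a contradiction. Hence if w^j is geodesic for all j ≥ 1 and l(w) ≥ 1, then w is a conjugacy geodesic. -/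
/-- A word is a conjugacy geodesic if no shorter word represents a conjugate
of the element it represents. -/
def IsConjGeodesicWord {X G : Type*} [Group G] (f : X → G) (w : List X) : Prop :=
  ∀ v : List X, IsConj (wordProd f v) (wordProd f w) → w.length ≤ v.length

/-!
If `π(w)` is conjugate by `c` to `π(v)` with `l(v) < l(w)`, write `c` and `c⁻¹` as words `u`, `u'`
(possible because the generating set is inverse-closed). Then `u v^j u'` represents `π(w)^j`, so
geodesicity of `w^j` gives `j l(w) ≤ l(u) + l(u') + j l(v)` for every `j ≥ 1`, which fails for
`j = l(u) + l(u') + 1`.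
-/

section WordProd

variable {X G : Type*} [Group G] (f : X → G)

theorem wordProd_append (u v : List X) :
    wordProd f (u ++ v) = wordProd f u * wordProd f v := by
  simp [wordProd]

theorem wordProd_flatten_replicate (j : ℕ) (w : List X) :
    wordProd f (List.replicate j w).flatten = wordProd f w ^ j := by
  simp [wordProd, List.map_flatten, List.prod_flatten, List.map_replicate]

theorem wordProd_surjective (hinv : ∀ x : X, ∃ y : X, f y = (f x)⁻¹)
    (hgen : Subgroup.closure (Set.range f) = ⊤) : Function.Surjective (wordProd f) := by
  have hclosed : (Set.range f)⁻¹ ⊆ Set.range f := by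
    rintro _ ⟨x, hx⟩
    obtain ⟨y, hy⟩ := hinv x
    exact ⟨y, by rw [hy, hx, inv_inv]⟩
  intro g
  have hg : g ∈ Submonoid.closure (Set.range f) := by
    rw [← Set.union_eq_self_of_subset_right hclosed, ← Subgroup.closure_toSubmonoid, hgen]
    trivial
  rw [← FreeMonoid.mrange_lift] at hg
  obtain ⟨m, rfl⟩ := hg
  exact ⟨m.toList, (FreeMonoid.lift_apply f m).symm⟩

end WordProd

theorem Nat.le_of_forall_mul_le_add_mul {a b C : ℕ} (h : ∀ j, 1 ≤ j → j * a ≤ C + j * b) :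
    a ≤ b := by
  by_contra! hba
  have := h (C + 1) (by omega)
  nlinarith

theorem isConjGeodesicWord_of_powers_geodesic_general {X G : Type*} [Group G]
    (f : X → G) (hinv : ∀ x : X, ∃ y : X, f y = (f x)⁻¹)
    (hgen : Subgroup.closure (Set.range f) = ⊤)
    (w : List X)
    (hpow : ∀ j : ℕ, 1 ≤ j → IsGeodesicWord f (List.replicate j w).flatten) :
    IsConjGeodesicWord f w := by
  intro v hconj
  obtain ⟨c, hc⟩ := isConj_iff.1 hconj
  obtain ⟨u, rfl⟩ := wordProd_surjective f hinv hgen c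
  obtain ⟨u', hu'⟩ := wordProd_surjective f hinv hgen (wordProd f u)⁻¹
  refine Nat.le_of_forall_mul_le_add_mul (C := u.length + u'.length) fun j hj => ?_
  have hrep : wordProd f (u ++ (List.replicate j v).flatten ++ u') =
      wordProd f (List.replicate j w).flatten := by
    rw [wordProd_append, wordProd_append, hu', wordProd_flatten_replicate,
      wordProd_flatten_replicate, ← hc, conj_pow]
  have hlen := hpow j hj _ hrep
  simp only [List.length_append, List.length_flatten, List.map_replicate, List.sum_replicate,
    smul_eq_mul] at hlen
  linarith

/-- If `w` is a nonempty word all of whose powers `w^j` (`j ≥ 1`) are geodesic,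
then `w` is a conjugacy geodesic. -/
theorem isConjGeodesicWord_of_powers_geodesic {X G : Type*} [Group G]
    (f : X → G) (hinv : ∀ x : X, ∃ y : X, f y = (f x)⁻¹)
    (hgen : Subgroup.closure (Set.range f) = ⊤)
    (w : List X) (hw : 1 ≤ w.length)
    (hpow : ∀ j : ℕ, 1 ≤ j → IsGeodesicWord f (List.replicate j w).flatten) :
    IsConjGeodesicWord f w :=
  isConjGeodesicWord_of_powers_geodesic_general f hinv hgen w hpow
end
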